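/- Let g be a continuous RV_ρ-function, ρ < 0, and set r = (|ρ| + 1)^{-1}. For compact operators S, T, define ‖Ṫ‖ := limsup_{j→∞} g(j)^{-1} μ_j(T). Then ‖Ṡ + Ṫ‖^r ≤ ‖Ṡ‖^r + ‖Ṫ‖^r, i.e., the quotient quasi-norm on 𝓛_g/(𝓛_g)₀ is r-convex. -/

import Mathlib

open Filter Topology

noncomputable def singVal {H : Type*} [NormedAddCommGroup H] [InnerProductSpace ℂ H]
    (T : H →L[ℂ] H) (j : ℕ) : ℝ :=
  sInf {c : ℝ | ∃ R : H →L[ℂ] H,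
    Module.rank ℂ (LinearMap.range (R : H →ₗ[ℂ] H)) ≤ (j : Cardinal) ∧ c = ‖T - R‖}

section Aux
variable {H : Type*} [NormedAddCommGroup H] [InnerProductSpace ℂ H]

lemma singValSet_nonempty (T : H →L[ℂ] H) (j : ℕ) :
    {c : ℝ | ∃ R : H →L[ℂ] H,
      Module.rank ℂ (LinearMap.range (R : H →ₗ[ℂ] H)) ≤ (j : Cardinal) ∧ c = ‖T - R‖}.Nonempty :=
  ⟨‖T‖, 0, by
    refine ⟨?_, by simp⟩
    have h0 : LinearMap.range ((0 : H →L[ℂ] H) : H →ₗ[ℂ] H) = ⊥ := by ext x; simp [eq_comm]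
    rw [h0, rank_bot]
    exact zero_le⟩

lemma singValSet_bddBelow (T : H →L[ℂ] H) (j : ℕ) :
    BddBelow {c : ℝ | ∃ R : H →L[ℂ] H,
      Module.rank ℂ (LinearMap.range (R : H →ₗ[ℂ] H)) ≤ (j : Cardinal) ∧ c = ‖T - R‖} :=
  ⟨0, fun _ ⟨_, _, hc⟩ => hc ▸ norm_nonneg _⟩

lemma singVal_nonneg (T : H →L[ℂ] H) (j : ℕ) : 0 ≤ singVal T j :=
  Real.sInf_nonneg fun _ ⟨_, _, hc⟩ => hc ▸ norm_nonneg _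

lemma singVal_antitone (T : H →L[ℂ] H) : Antitone fun j => singVal T j := by
  intro j k hjk
  dsimp only
  unfold singVal
  apply csInf_le_csInf (singValSet_bddBelow T k) (singValSet_nonempty T j)
  rintro c ⟨R, hR, rfl⟩
  exact ⟨R, hR.trans (by exact_mod_cast Nat.cast_le.mpr hjk), rfl⟩

lemma singVal_fan (S T : H →L[ℂ] H) (j k : ℕ) :
    singVal (S + T) (j + k) ≤ singVal S j + singVal T k := by
  have key : ∀ R₁ R₂ : H →L[ℂ] H,
      Module.rank ℂ (LinearMap.range (R₁ : H →ₗ[ℂ] H)) ≤ (j : Cardinal) →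
      Module.rank ℂ (LinearMap.range (R₂ : H →ₗ[ℂ] H)) ≤ (k : Cardinal) →
      singVal (S + T) (j + k) ≤ ‖S - R₁‖ + ‖T - R₂‖ := by
    intro R₁ R₂ h₁ h₂
    have hrange : LinearMap.range ((R₁ + R₂ : H →L[ℂ] H) : H →ₗ[ℂ] H) ≤
        LinearMap.range (R₁ : H →ₗ[ℂ] H) ⊔ LinearMap.range (R₂ : H →ₗ[ℂ] H) := by
      rintro y ⟨x, rfl⟩
      exact Submodule.mem_sup.mpr ⟨R₁ x, ⟨x, rfl⟩, R₂ x, ⟨x, rfl⟩, rfl⟩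
    have hrank : Module.rank ℂ (LinearMap.range ((R₁ + R₂ : H →L[ℂ] H) : H →ₗ[ℂ] H)) ≤
        ((j + k : ℕ) : Cardinal) := by
      refine (Submodule.rank_mono hrange).trans ?_
      refine (Submodule.rank_add_le_rank_add_rank _ _).trans ?_
      rw [Nat.cast_add]
      exact add_le_add h₁ h₂
    have hmem : ‖(S + T) - (R₁ + R₂)‖ ∈ {c : ℝ | ∃ R : H →L[ℂ] H,
        Module.rank ℂ (LinearMap.range (R : H →ₗ[ℂ] H)) ≤ ((j + k : ℕ) : Cardinal) ∧ c = ‖(S + T) - R‖} :=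
      ⟨R₁ + R₂, hrank, rfl⟩
    refine (csInf_le (singValSet_bddBelow _ _) hmem).trans ?_
    have : (S + T) - (R₁ + R₂) = (S - R₁) + (T - R₂) := by abel
    rw [this]
    exact norm_add_le _ _
  have h1 : singVal (S + T) (j + k) - singVal T k ≤ singVal S j := by
    apply le_csInf (singValSet_nonempty S j)
    rintro a ⟨R₁, hR₁, rfl⟩
    have h2 : singVal (S + T) (j + k) - ‖S - R₁‖ ≤ singVal T k := by
      apply le_csInf (singValSet_nonempty T k)
      rintro b ⟨R₂, hR₂, rfl⟩
      linarith [key R₁ R₂ hR₁ hR₂]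
    linarith
  linarith

end Aux

/-- The quotient quasi-norm `‖Ṫ‖ = limsup_j g(j)⁻¹ μ_j(T)` on `𝓛_g/(𝓛_g)₀` is `r`-convex
with `r = (|ρ| + 1)⁻¹`: `‖Ṡ + Ṫ‖^r ≤ ‖Ṡ‖^r + ‖Ṫ‖^r`. -/
theorem quotient_quasinorm_rConvex {H : Type*} [NormedAddCommGroup H]
    [InnerProductSpace ℂ H] [CompleteSpace H]
    (ρ : ℝ) (hρ : ρ < 0) (g : ℝ → ℝ)
    (hpos : ∀ t ∈ Set.Ici (0:ℝ), 0 < g t)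
    (hcont : ContinuousOn g (Set.Ici (0:ℝ)))
    (hdec : ∃ b ≥ (0:ℝ), AntitoneOn g (Set.Ici b))
    (hrv : ∀ l : ℝ, 0 < l → Tendsto (fun t => g (l * t) / g t) atTop (𝓝 (l ^ ρ)))
    (S T : H →L[ℂ] H) (hS : IsCompactOperator S) (hT : IsCompactOperator T)
    (hSg : (fun j : ℕ => singVal S j) =O[atTop] fun j : ℕ => g j)
    (hTg : (fun j : ℕ => singVal T j) =O[atTop] fun j : ℕ => g j) :
    (limsup (fun j : ℕ => (g j)⁻¹ * singVal (S + T) j) atTop) ^ ((|ρ| + 1)⁻¹)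
      ≤ (limsup (fun j : ℕ => (g j)⁻¹ * singVal S j) atTop) ^ ((|ρ| + 1)⁻¹)
        + (limsup (fun j : ℕ => (g j)⁻¹ * singVal T j) atTop) ^ ((|ρ| + 1)⁻¹) := by
  have hg : ∀ j : ℕ, 0 < g j := fun j => hpos _ (Set.mem_Ici.mpr (Nat.cast_nonneg j))
  set fS : ℕ → ℝ := fun j => (g j)⁻¹ * singVal S j with hfS
  set fT : ℕ → ℝ := fun j => (g j)⁻¹ * singVal T j with hfT
  set fST : ℕ → ℝ := fun j => (g j)⁻¹ * singVal (S + T) j with hfST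
  have hfSnn : ∀ j, 0 ≤ fS j := fun j => mul_nonneg (inv_nonneg.mpr (hg j).le) (singVal_nonneg S j)
  have hfTnn : ∀ j, 0 ≤ fT j := fun j => mul_nonneg (inv_nonneg.mpr (hg j).le) (singVal_nonneg T j)
  have hfSTnn : ∀ j, 0 ≤ fST j :=
    fun j => mul_nonneg (inv_nonneg.mpr (hg j).le) (singVal_nonneg (S + T) j)
  -- boundedness from the O-hypotheses
  have hbound : ∀ (W : H →L[ℂ] H), (fun j : ℕ => singVal W j) =O[atTop] (fun j : ℕ => g j) →
      IsBoundedUnder (· ≤ ·) atTop (fun j : ℕ => (g j)⁻¹ * singVal W j) := by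
    intro W hW
    obtain ⟨C, hC⟩ := hW.bound
    apply isBoundedUnder_of_eventually_le (a := C)
    filter_upwards [hC] with j hj
    have h1 : singVal W j ≤ C * g j := by
      have := hj
      rwa [Real.norm_eq_abs, Real.norm_eq_abs, abs_of_nonneg (singVal_nonneg W j),
        abs_of_nonneg (hg j).le] at this
    calc (g j)⁻¹ * singVal W j ≤ (g j)⁻¹ * (C * g j) :=
          mul_le_mul_of_nonneg_left h1 (inv_nonneg.mpr (hg j).le)
      _ = C := by rw [mul_comm, mul_assoc, mul_inv_cancel₀ (hg j).ne', mul_one]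
  have hbS : IsBoundedUnder (· ≤ ·) atTop fS := hbound S hSg
  have hbT : IsBoundedUnder (· ≤ ·) atTop fT := hbound T hTg
  set A := limsup fS atTop with hA
  set B := limsup fT atTop with hB
  set L := limsup fST atTop with hL
  have hAnn : 0 ≤ A := le_limsup_of_frequently_le (Frequently.of_forall hfSnn) hbS
  have hBnn : 0 ≤ B := le_limsup_of_frequently_le (Frequently.of_forall hfTnn) hbT
  have hcast : Tendsto (fun j : ℕ => (j : ℝ)) atTop atTop := tendsto_natCast_atTop_atTop
  obtain ⟨b0, hb0, hanti⟩ := hdec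
  -- the eventual Fan-type bound
  have hev_gen : ∀ θ φ ε : ℝ, 0 < θ → 0 < φ → θ + φ < 1 → 0 < ε →
      ∀ᶠ j : ℕ in atTop, fST j ≤ (θ ^ ρ + ε) * (A + ε) + (φ ^ ρ + ε) * (B + ε) := by
    intro θ φ ε hθ hφ hθφ hε
    set m : ℕ → ℕ := fun j => ⌈θ * j⌉₊ with hm
    set n : ℕ → ℕ := fun j => ⌈φ * j⌉₊ with hn
    have hθj : Tendsto (fun j : ℕ => θ * j) atTop atTop := hcast.const_mul_atTop hθ
    have hφj : Tendsto (fun j : ℕ => φ * j) atTop atTop := hcast.const_mul_atTop hφ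
    have hmj : Tendsto m atTop atTop := by
      rw [tendsto_atTop]
      intro N
      filter_upwards [hθj.eventually_ge_atTop (N : ℝ)] with j hj
      exact_mod_cast hj.trans (Nat.le_ceil _)
    have hnj : Tendsto n atTop atTop := by
      rw [tendsto_atTop]
      intro N
      filter_upwards [hφj.eventually_ge_atTop (N : ℝ)] with j hj
      exact_mod_cast hj.trans (Nat.le_ceil _)
    have haS : ∀ᶠ j : ℕ in atTop, fS (m j) ≤ A + ε := by
      have h1 : ∀ᶠ k : ℕ in atTop, fS k < A + ε :=
        eventually_lt_of_limsup_lt (lt_add_of_pos_right A hε) hbS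
      exact (hmj.eventually h1).mono fun j hj => hj.le
    have haT : ∀ᶠ j : ℕ in atTop, fT (n j) ≤ B + ε := by
      have h1 : ∀ᶠ k : ℕ in atTop, fT k < B + ε :=
        eventually_lt_of_limsup_lt (lt_add_of_pos_right B hε) hbT
      exact (hnj.eventually h1).mono fun j hj => hj.le
    have hratio : ∀ (ψ : ℝ), 0 < ψ →
        ∀ᶠ j : ℕ in atTop, g (⌈ψ * j⌉₊ : ℕ) / g j ≤ ψ ^ ρ + ε := by
      intro ψ hψ
      have hψj : Tendsto (fun j : ℕ => ψ * j) atTop atTop := hcast.const_mul_atTop hψ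
      have h1 : Tendsto (fun j : ℕ => g (ψ * j) / g j) atTop (𝓝 (ψ ^ ρ)) :=
        (hrv ψ hψ).comp hcast
      have h2 : ∀ᶠ j : ℕ in atTop, g (ψ * j) / g j < ψ ^ ρ + ε :=
        h1.eventually_lt_const (lt_add_of_pos_right _ hε)
      have h3 : ∀ᶠ j : ℕ in atTop, g (⌈ψ * j⌉₊ : ℕ) ≤ g (ψ * j) := by
        filter_upwards [hψj.eventually_ge_atTop b0] with j hj
        exact hanti (Set.mem_Ici.mpr hj) (Set.mem_Ici.mpr (hj.trans (Nat.le_ceil _)))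
          (Nat.le_ceil _)
      filter_upwards [h2, h3] with j h2j h3j
      exact le_trans ((div_le_div_iff_of_pos_right (hg j)).mpr h3j) h2j.le
    have hratS : ∀ᶠ j : ℕ in atTop, g (m j) / g j ≤ θ ^ ρ + ε := hratio θ hθ
    have hratT : ∀ᶠ j : ℕ in atTop, g (n j) / g j ≤ φ ^ ρ + ε := hratio φ hφ
    have hmn : ∀ᶠ j : ℕ in atTop, m j + n j ≤ j := by
      have hδ : 0 < 1 - (θ + φ) := by linarith
      have h2 : ∀ᶠ x : ℝ in atTop, 2 ≤ (1 - (θ + φ)) * x :=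
        (tendsto_id.const_mul_atTop hδ).eventually_ge_atTop 2
      filter_upwards [hcast.eventually h2] with j hj
      have h3 : (m j : ℝ) < θ * j + 1 := Nat.ceil_lt_add_one (by positivity)
      have h4 : (n j : ℝ) < φ * j + 1 := Nat.ceil_lt_add_one (by positivity)
      have : (m j : ℝ) + (n j : ℝ) ≤ (j : ℝ) := by nlinarith
      exact_mod_cast this
    have hθρε : 0 < θ ^ ρ + ε := add_pos (Real.rpow_pos_of_pos hθ ρ) hε
    have hφρε : 0 < φ ^ ρ + ε := add_pos (Real.rpow_pos_of_pos hφ ρ) hε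
    filter_upwards [haS, haT, hratS, hratT, hmn] with j h1 h2 h3 h4 h5
    have hgj := hg j
    have hgm := hg (m j)
    have hgn := hg (n j)
    have step1 : singVal (S + T) j ≤ singVal S (m j) + singVal T (n j) :=
      le_trans (singVal_antitone (S + T) h5) (singVal_fan S T (m j) (n j))
    have hrat3 : 0 ≤ g (m j) / g j := div_nonneg hgm.le hgj.le
    have hrat4 : 0 ≤ g (n j) / g j := div_nonneg hgn.le hgj.le
    calc fST j ≤ (g j)⁻¹ * (singVal S (m j) + singVal T (n j)) :=
          mul_le_mul_of_nonneg_left step1 (inv_nonneg.mpr hgj.le)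
      _ = (g (m j) / g j) * fS (m j) + (g (n j) / g j) * fT (n j) := by
          simp only [hfS, hfT]
          field_simp
      _ ≤ (θ ^ ρ + ε) * (A + ε) + (φ ^ ρ + ε) * (B + ε) :=
          add_le_add (mul_le_mul h3 h1 (hfSnn _) hθρε.le)
            (mul_le_mul h4 h2 (hfTnn _) hφρε.le)
  have hcob : IsCoboundedUnder (· ≤ ·) atTop fST :=
    isCoboundedUnder_le_of_le atTop (x := 0) hfSTnn
  have hbST : IsBoundedUnder (· ≤ ·) atTop fST := by
    obtain ⟨C, hC⟩ := eventually_atTop.mp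
      (hev_gen (1/4) (1/4) 1 (by norm_num) (by norm_num) (by norm_num) one_pos)
    exact isBoundedUnder_of_eventually_le (a := ((1/4:ℝ) ^ ρ + 1) * (A + 1) +
      ((1/4:ℝ) ^ ρ + 1) * (B + 1)) (eventually_atTop.mpr ⟨C, hC⟩)
  have hLnn : 0 ≤ L := le_limsup_of_frequently_le (Frequently.of_forall hfSTnn) hbST
  -- main inequality with strict θ + φ < 1
  have main : ∀ θ φ : ℝ, 0 < θ → 0 < φ → θ + φ < 1 → L ≤ θ ^ ρ * A + φ ^ ρ * B := by
    intro θ φ hθ hφ hθφ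
    have hstep : ∀ ε : ℝ, 0 < ε → L ≤ (θ ^ ρ + ε) * (A + ε) + (φ ^ ρ + ε) * (B + ε) :=
      fun ε hε => limsup_le_of_le hcob (hev_gen θ φ ε hθ hφ hθφ hε)
    have hcont2 : Tendsto (fun ε : ℝ => (θ ^ ρ + ε) * (A + ε) + (φ ^ ρ + ε) * (B + ε))
        (𝓝[>] (0:ℝ)) (𝓝 (θ ^ ρ * A + φ ^ ρ * B)) := by
      have hc : Continuous (fun ε : ℝ => (θ ^ ρ + ε) * (A + ε) + (φ ^ ρ + ε) * (B + ε)) := by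
        fun_prop
      have h0 : Tendsto (fun ε : ℝ => (θ ^ ρ + ε) * (A + ε) + (φ ^ ρ + ε) * (B + ε))
          (𝓝[>] (0:ℝ)) (𝓝 ((θ ^ ρ + 0) * (A + 0) + (φ ^ ρ + 0) * (B + 0))) :=
        (hc.tendsto 0).mono_left nhdsWithin_le_nhds
      simpa using h0
    exact ge_of_tendsto hcont2 (eventually_mem_nhdsWithin.mono fun ε hε => hstep ε hε)
  -- pass to θ + φ = 1 by scaling
  have main' : ∀ θ : ℝ, 0 < θ → θ < 1 → L ≤ θ ^ ρ * A + (1 - θ) ^ ρ * B := by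
    intro θ hθ hθ1
    have key : ∀ c : ℝ, 0 < c → c < 1 → L ≤ c ^ ρ * (θ ^ ρ * A + (1 - θ) ^ ρ * B) := by
      intro c hc hc1
      have hc2 : 0 < c * (1 - θ) := mul_pos hc (by linarith)
      have hc3 : c * θ + c * (1 - θ) < 1 := by nlinarith
      have h := main (c * θ) (c * (1 - θ)) (by positivity) hc2 hc3
      calc L ≤ (c * θ) ^ ρ * A + (c * (1 - θ)) ^ ρ * B := h
        _ = c ^ ρ * (θ ^ ρ * A + (1 - θ) ^ ρ * B) := by
            rw [Real.mul_rpow hc.le hθ.le, Real.mul_rpow hc.le (by linarith)]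
            ring
    have hten : Tendsto (fun c : ℝ => c ^ ρ * (θ ^ ρ * A + (1 - θ) ^ ρ * B))
        (𝓝[<] (1:ℝ)) (𝓝 (θ ^ ρ * A + (1 - θ) ^ ρ * B)) := by
      have h1 : ContinuousAt (fun c : ℝ => c ^ ρ) 1 :=
        Real.continuousAt_rpow_const 1 ρ (Or.inl one_ne_zero)
      have h2 := ((h1.mul continuousAt_const).mono_left nhdsWithin_le_nhds :
        Tendsto (fun c : ℝ => c ^ ρ * (θ ^ ρ * A + (1 - θ) ^ ρ * B)) (𝓝[<] 1) _)
      simpa [Pi.mul_def] using h2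
    refine ge_of_tendsto hten ?_
    filter_upwards [eventually_mem_nhdsWithin,
      ((eventually_gt_nhds one_pos).filter_mono nhdsWithin_le_nhds :
        ∀ᶠ c : ℝ in 𝓝[<] 1, 0 < c)] with c hc1 hc0
    exact key c hc0 hc1
  -- now the scalar optimization
  clear_value A B L
  have habs : |ρ| + 1 = 1 - ρ := by rw [abs_of_neg hρ]; ring
  set r : ℝ := (|ρ| + 1)⁻¹ with hr
  have hr' : r = (1 - ρ)⁻¹ := by rw [hr, habs]
  have h1ρ : (0:ℝ) < 1 - ρ := by linarith
  have hrpos : 0 < r := by rw [hr']; positivity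
  have hrmul : r * (1 - ρ) = 1 := by rw [hr']; field_simp
  have claim : L ≤ (A ^ r + B ^ r) ^ (1 - ρ) := by
    rcases eq_or_lt_of_le hAnn with hA0 | hApos
    · rcases eq_or_lt_of_le hBnn with hB0 | hBpos
      · -- A = B = 0
        have h := main' (1/2) (by norm_num) (by norm_num)
        rw [← hA0, ← hB0] at h
        simp only [mul_zero, add_zero] at h
        refine h.trans ?_
        positivity
      · -- A = 0, B > 0
        have hLB : L ≤ B := by
          have key : ∀ c : ℝ, 0 < c → c < 1 → L ≤ c ^ ρ * B := by
            intro c hc hc1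
            have h := main ((1 - c)/2) c (by linarith) hc (by linarith)
            rw [← hA0, mul_zero, zero_add] at h
            exact h
          have hten : Tendsto (fun c : ℝ => c ^ ρ * B) (𝓝[<] (1:ℝ)) (𝓝 B) := by
            have h1 : ContinuousAt (fun c : ℝ => c ^ ρ) 1 :=
              Real.continuousAt_rpow_const 1 ρ (Or.inl one_ne_zero)
            have h2 := ((h1.mul continuousAt_const).mono_left nhdsWithin_le_nhds :
              Tendsto (fun c : ℝ => c ^ ρ * B) (𝓝[<] 1) _)
            simpa [Pi.mul_def] using h2
          refine ge_of_tendsto hten ?_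
          filter_upwards [eventually_mem_nhdsWithin,
            ((eventually_gt_nhds one_pos).filter_mono nhdsWithin_le_nhds :
              ∀ᶠ c : ℝ in 𝓝[<] 1, 0 < c)] with c hc1 hc0
          exact key c hc0 hc1
        have hBr : (A ^ r + B ^ r) ^ (1 - ρ) = B := by
          rw [← hA0, Real.zero_rpow hrpos.ne', zero_add, ← Real.rpow_mul hBnn, hrmul,
            Real.rpow_one]
        rw [hBr]
        exact hLB
    · rcases eq_or_lt_of_le hBnn with hB0 | hBpos
      · -- B = 0, A > 0
        have hLA : L ≤ A := by
          have key : ∀ c : ℝ, 0 < c → c < 1 → L ≤ c ^ ρ * A := by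
            intro c hc hc1
            have h := main c ((1 - c)/2) hc (by linarith) (by linarith)
            rw [← hB0, mul_zero, add_zero] at h
            exact h
          have hten : Tendsto (fun c : ℝ => c ^ ρ * A) (𝓝[<] (1:ℝ)) (𝓝 A) := by
            have h1 : ContinuousAt (fun c : ℝ => c ^ ρ) 1 :=
              Real.continuousAt_rpow_const 1 ρ (Or.inl one_ne_zero)
            have h2 := ((h1.mul continuousAt_const).mono_left nhdsWithin_le_nhds :
              Tendsto (fun c : ℝ => c ^ ρ * A) (𝓝[<] 1) _)
            simpa [Pi.mul_def] using h2
          refine ge_of_tendsto hten ?_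
          filter_upwards [eventually_mem_nhdsWithin,
            ((eventually_gt_nhds one_pos).filter_mono nhdsWithin_le_nhds :
              ∀ᶠ c : ℝ in 𝓝[<] 1, 0 < c)] with c hc1 hc0
          exact key c hc0 hc1
        have hAr : (A ^ r + B ^ r) ^ (1 - ρ) = A := by
          rw [← hB0, Real.zero_rpow hrpos.ne', add_zero, ← Real.rpow_mul hAnn, hrmul,
            Real.rpow_one]
        rw [hAr]
        exact hLA
      · -- A > 0, B > 0
        have hArpos : 0 < A ^ r := Real.rpow_pos_of_pos hApos r
        have hBrpos : 0 < B ^ r := Real.rpow_pos_of_pos hBpos r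
        set D := A ^ r + B ^ r with hD
        have hDpos : 0 < D := add_pos hArpos hBrpos
        have hθ0pos : 0 < A ^ r / D := div_pos hArpos hDpos
        have hθ0lt : A ^ r / D < 1 := (div_lt_one hDpos).mpr (by linarith)
        have h := main' (A ^ r / D) hθ0pos hθ0lt
        have hφ0 : 1 - A ^ r / D = B ^ r / D := by field_simp; ring
        have hrρ : r * ρ = r - 1 := by linear_combination -hrmul
        have e1 : (A ^ r / D) ^ ρ * A = A ^ r / D ^ ρ := by
          rw [Real.div_rpow (Real.rpow_nonneg hAnn r) hDpos.le, ← Real.rpow_mul hAnn, hrρ,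
            Real.rpow_sub hApos, Real.rpow_one]
          field_simp
        have e2 : (B ^ r / D) ^ ρ * B = B ^ r / D ^ ρ := by
          rw [Real.div_rpow (Real.rpow_nonneg hBnn r) hDpos.le, ← Real.rpow_mul hBnn, hrρ,
            Real.rpow_sub hBpos, Real.rpow_one]
          field_simp
        have e3 : D ^ (1 - ρ) = D / D ^ ρ := by
          rw [Real.rpow_sub hDpos, Real.rpow_one]
        rw [hφ0, e1, e2] at h
        rw [e3]
        calc L ≤ A ^ r / D ^ ρ + B ^ r / D ^ ρ := h
          _ = D / D ^ ρ := by rw [← add_div, hD]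
  have hfinal : L ^ r ≤ A ^ r + B ^ r := by
    calc L ^ r ≤ ((A ^ r + B ^ r) ^ (1 - ρ)) ^ r := Real.rpow_le_rpow hLnn claim hrpos.le
      _ = A ^ r + B ^ r := by
          have hXnn : 0 ≤ A ^ r + B ^ r :=
            add_nonneg (Real.rpow_nonneg hAnn r) (Real.rpow_nonneg hBnn r)
          rw [← Real.rpow_mul hXnn, mul_comm, hrmul, Real.rpow_one]
  exact hfinal
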